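/- arXiv:math/0506124 — 7 statements merged into one kernel-verified Lean document; each statement's English description precedes it below -/
import Mathlib

section
/- For Hermitian positive definite matrices A and B, log(B) - log(A) = ∫₀^∞ (A + τI)⁻¹ (B - A) (B + τI)⁻¹ dτ. -/
/-!
For `x > 0`, `log x = ∫₀^∞ ((1 + τ)⁻¹ - (x + τ)⁻¹) dτ`, since `log (x + τ) - log (1 + τ)` is an
antiderivative of the integrand vanishing at infinity. Applied to the eigenvalues this gives
`log A = ∫₀^∞ ((1 + τ)⁻¹ I - (A + τ I)⁻¹) dτ` for positive definite `A`; the term `(1 + τ)⁻¹ I`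
makes each integral converge and cancels in `log B - log A`, leaving
`(A + τ I)⁻¹ - (B + τ I)⁻¹ = (A + τ I)⁻¹ (B - A) (B + τ I)⁻¹`.
-/

open MeasureTheory Matrix Set Filter Topology
open scoped ComplexOrder

namespace Real

lemma hasDerivAt_log_add_sub_log_add {a b x : ℝ} (ha : 0 < a + x) (hb : 0 < b + x) :
    HasDerivAt (fun τ => log (a + τ) - log (b + τ)) ((a + x)⁻¹ - (b + x)⁻¹) x := by
  have hlog {c : ℝ} (hc : 0 < c + x) : HasDerivAt (fun τ => log (c + τ)) (c + x)⁻¹ x := by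
    simpa using ((hasDerivAt_id x).const_add c).log hc.ne'
  exact (hlog ha).sub (hlog hb)

lemma tendsto_log_add_sub_log_add (a b : ℝ) :
    Tendsto (fun τ => log (a + τ) - log (b + τ)) atTop (𝓝 0) := by
  simpa [add_comm, sub_sub_sub_cancel_right] using
    (tendsto_log_comp_add_sub_log a).sub (tendsto_log_comp_add_sub_log b)

lemma integrableOn_Ioi_inv_add_sub_inv_add {a b : ℝ} (ha : 0 < a) (hb : 0 < b) :
    IntegrableOn (fun τ => (a + τ)⁻¹ - (b + τ)⁻¹) (Ioi 0) := by
  have hderiv : ∀ x ∈ Ici (0 : ℝ),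
      HasDerivAt (fun τ => log (a + τ) - log (b + τ)) ((a + x)⁻¹ - (b + x)⁻¹) x :=
    fun x hx => hasDerivAt_log_add_sub_log_add (by linarith [mem_Ici.1 hx])
      (by linarith [mem_Ici.1 hx])
  rcases le_total a b with hab | hba
  · refine integrableOn_Ioi_deriv_of_nonneg' hderiv (fun x hx => ?_)
      (tendsto_log_add_sub_log_add a b)
    exact sub_nonneg.2 (inv_anti₀ (by linarith [mem_Ioi.1 hx]) (by linarith))
  · refine integrableOn_Ioi_deriv_of_nonpos' hderiv (fun x hx => ?_)
      (tendsto_log_add_sub_log_add a b)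
    exact sub_nonpos.2 (inv_anti₀ (by linarith [mem_Ioi.1 hx]) (by linarith))

lemma integral_Ioi_inv_add_sub_inv_add {a b : ℝ} (ha : 0 < a) (hb : 0 < b) :
    ∫ τ in Ioi 0, ((a + τ)⁻¹ - (b + τ)⁻¹) = log b - log a := by
  rw [integral_Ioi_of_hasDerivAt_of_tendsto'
    (fun x hx => hasDerivAt_log_add_sub_log_add (by linarith [mem_Ici.1 hx])
      (by linarith [mem_Ici.1 hx]))
    (integrableOn_Ioi_inv_add_sub_inv_add ha hb) (tendsto_log_add_sub_log_add a b)]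
  simp

end Real

namespace Matrix.IsHermitian

variable {n 𝕜 : Type*} [RCLike 𝕜] [Fintype n] [DecidableEq n] {A : Matrix n n 𝕜}
  (hA : A.IsHermitian)

lemma cfc_apply_eq_sum (f : ℝ → ℝ) (i j : n) :
    hA.cfc f i j = ∑ k, hA.eigenvectorUnitary i k * (f (hA.eigenvalues k) : 𝕜) *
      star (hA.eigenvectorUnitary j k) := by
  simp [IsHermitian.cfc, Unitary.conjStarAlgAut_apply, mul_apply, diagonal_apply, star_apply]

variable {X : Type*} [MeasurableSpace X] {μ : Measure X} {F : X → ℝ → ℝ}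

lemma integrable_cfc_apply (hF : ∀ k, Integrable (fun t => F t (hA.eigenvalues k)) μ)
    (i j : n) : Integrable (fun t => hA.cfc (F t) i j) μ := by
  simp only [cfc_apply_eq_sum]
  exact integrable_finsetSum _ fun k _ => ((hF k).ofReal.const_mul _).mul_const _

lemma integral_cfc_apply {f : ℝ → ℝ} (hF : ∀ k, Integrable (fun t => F t (hA.eigenvalues k)) μ)
    (hFf : ∀ k, ∫ t, F t (hA.eigenvalues k) ∂μ = f (hA.eigenvalues k)) (i j : n) :
    ∫ t, hA.cfc (F t) i j ∂μ = hA.cfc f i j := by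
  simp only [cfc_apply_eq_sum]
  rw [integral_finsetSum _ fun k _ => ((hF k).ofReal.const_mul _).mul_const _]
  simp only [integral_mul_const, integral_const_mul, integral_ofReal, hFf]

lemma cfc_inv_add_smul_one {τ : ℝ} (hτ : ∀ k, hA.eigenvalues k + τ ≠ 0) :
    hA.cfc (fun x => (x + τ)⁻¹) = (A + τ • 1)⁻¹ := by
  have hspec : ∀ x ∈ spectrum ℝ A, x + τ ≠ 0 := by
    rw [hA.spectrum_real_eq_range_eigenvalues]
    rintro _ ⟨k, rfl⟩
    exact hτ k
  rw [← hA.cfc_eq, cfc_inv _ _ hspec, cfc_add_const τ (fun x => x) A, cfc_id' ℝ A,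
    Algebra.algebraMap_eq_smul_one, nonsing_inv_eq_ringInverse]

end Matrix.IsHermitian

namespace Matrix.PosDef

variable {n 𝕜 : Type*} [RCLike 𝕜] [Fintype n] [DecidableEq n] {A : Matrix n n 𝕜}

lemma isUnit_add_smul_one (hA : A.PosDef) {τ : ℝ} (hτ : 0 ≤ τ) : IsUnit (A + τ • 1) :=
  (hA.add_posSemidef (PosSemidef.one.smul hτ)).isUnit

lemma cfc_inv_one_add_sub_inv_add (hA : A.PosDef) {τ : ℝ} (hτ : 0 ≤ τ) :
    hA.1.cfc (fun x => (1 + τ)⁻¹ - (x + τ)⁻¹) = (1 + τ)⁻¹ • 1 - (A + τ • 1)⁻¹ := by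
  rw [← hA.1.cfc_inv_add_smul_one fun k =>
      (add_pos_of_pos_of_nonneg (hA.eigenvalues_pos k) hτ).ne',
    ← hA.1.cfc_eq, ← hA.1.cfc_eq, cfc_sub _ _ A continuousOn_const
      (A.finite_real_spectrum.continuousOn _), cfc_const (1 + τ)⁻¹ A hA.1.isSelfAdjoint,
    Algebra.algebraMap_eq_smul_one]

lemma integrableOn_inv_one_add_smul_sub_inv_add_smul_apply (hA : A.PosDef) (i j : n) :
    IntegrableOn (fun τ : ℝ => ((1 + τ)⁻¹ • 1 - (A + τ • 1)⁻¹) i j) (Ioi 0) :=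
  IntegrableOn.congr_fun (hA.1.integrable_cfc_apply (F := fun τ x => (1 + τ)⁻¹ - (x + τ)⁻¹)
    (fun k => Real.integrableOn_Ioi_inv_add_sub_inv_add one_pos (hA.eigenvalues_pos k)) i j)
    (fun _ hτ => congrFun₂ (hA.cfc_inv_one_add_sub_inv_add (le_of_lt hτ)) i j) measurableSet_Ioi

lemma cfc_log_apply_eq_integral (hA : A.PosDef) (i j : n) :
    hA.1.cfc Real.log i j = ∫ τ in Ioi (0 : ℝ), ((1 + τ)⁻¹ • 1 - (A + τ • 1)⁻¹) i j := by
  rw [← setIntegral_congr_fun measurableSet_Ioi fun τ hτ =>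
      congrFun₂ (hA.cfc_inv_one_add_sub_inv_add (le_of_lt hτ)) i j]
  refine (hA.1.integral_cfc_apply (F := fun τ x => (1 + τ)⁻¹ - (x + τ)⁻¹)
    (fun k => Real.integrableOn_Ioi_inv_add_sub_inv_add one_pos (hA.eigenvalues_pos k))
    (fun k => ?_) i j).symm
  rw [Real.integral_Ioi_inv_add_sub_inv_add one_pos (hA.eigenvalues_pos k), Real.log_one,
    sub_zero]

end Matrix.PosDef

/-- For Hermitian positive definite matrices `A` and `B`,
`log B - log A = ∫₀^∞ (A + τI)⁻¹ (B - A) (B + τI)⁻¹ dτ` (entrywise integral),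
where `log` is the matrix logarithm defined via the spectral decomposition. -/
theorem log_sub_log_eq_integral {n : ℕ} (A B : Matrix (Fin n) (Fin n) ℂ)
    (hA : A.PosDef) (hB : B.PosDef) :
    hB.1.cfc Real.log - hA.1.cfc Real.log =
      Matrix.of (fun i j =>
        ∫ τ in Set.Ioi (0 : ℝ),
          ((A + (τ : ℂ) • (1 : Matrix (Fin n) (Fin n) ℂ))⁻¹ * (B - A) *
            (B + (τ : ℂ) • (1 : Matrix (Fin n) (Fin n) ℂ))⁻¹) i j) := by
  ext i j
  have hresolvent : ∀ τ ∈ Ioi (0 : ℝ),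
      ((A + (τ : ℂ) • 1)⁻¹ * (B - A) * (B + (τ : ℂ) • 1)⁻¹) i j =
        ((1 + τ)⁻¹ • 1 - (B + τ • 1)⁻¹) i j - ((1 + τ)⁻¹ • 1 - (A + τ • 1)⁻¹) i j := by
    intro τ hτ
    rw [← Matrix.sub_apply, sub_sub_sub_cancel_left, Complex.coe_smul,
      inv_sub_inv (iff_of_true (hA.isUnit_add_smul_one hτ.le) (hB.isUnit_add_smul_one hτ.le)),
      add_sub_add_right_eq_sub]
  rw [Matrix.sub_apply, of_apply, setIntegral_congr_fun measurableSet_Ioi hresolvent,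
    integral_sub (hB.integrableOn_inv_one_add_smul_sub_inv_add_smul_apply i j)
      (hA.integrableOn_inv_one_add_smul_sub_inv_add_smul_apply i j),
    hA.cfc_log_apply_eq_integral, hB.cfc_log_apply_eq_integral]
end

section
/- For square matrices A and B and t ∈ ℝ, e^{-tA} e^{t(A+B)} - I = ∫₀^t e^{-sA} B e^{s(A+B)} ds. -/
/-!
On `ℝ`, the function `s ↦ e^{-sA} e^{s(A+B)}` has derivative
`e^{-sA} (-A + (A + B)) e^{s(A+B)} = e^{-sA} B e^{s(A+B)}`, so the identity is the fundamental
theorem of calculus; it holds in any real Banach algebra. For matrices, taking an entry is a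
continuous linear map, so it commutes with the integral.
-/

open MeasureTheory Matrix NormedSpace

section BanachAlgebra

variable {𝔸 : Type*} [NormedRing 𝔸] [NormedAlgebra ℝ 𝔸] [CompleteSpace 𝔸]

theorem continuous_exp_neg_smul_mul_mul_exp_smul (A B C : 𝔸) :
    Continuous fun s : ℝ => exp (-(s • A)) * B * exp (s • C) := by
  simp only [← smul_neg]
  exact ((differentiable_exp_smul_const ℝ (-A)).continuous.mul continuous_const).mul
    (differentiable_exp_smul_const ℝ C).continuous

theorem hasDerivAt_exp_neg_smul_mul_exp_smul (A B : 𝔸) (t : ℝ) :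
    HasDerivAt (fun s : ℝ => exp (-(s • A)) * exp (s • (A + B)))
      (exp (-(t • A)) * B * exp (t • (A + B))) t := by
  have hA : HasDerivAt (fun s : ℝ => exp (s • -A)) (exp (t • -A) * -A) t :=
    hasDerivAt_exp_smul_const (-A) t
  simp only [smul_neg] at hA
  refine (hA.mul (hasDerivAt_exp_smul_const' (A + B) t)).congr_deriv ?_
  noncomm_ring

theorem exp_neg_smul_mul_exp_smul_sub_one (A B : 𝔸) (t : ℝ) :
    exp (-(t • A)) * exp (t • (A + B)) - 1 =
      ∫ s in (0 : ℝ)..t, exp (-(s • A)) * B * exp (s • (A + B)) := by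
  rw [intervalIntegral.integral_eq_sub_of_hasDerivAt
    (fun s _ => hasDerivAt_exp_neg_smul_mul_exp_smul A B s)
    ((continuous_exp_neg_smul_mul_mul_exp_smul A B (A + B)).intervalIntegrable 0 t)]
  simp

end BanachAlgebra

-- Any norm would do: it only serves to make matrices a Banach algebra, and all norms give the
-- product topology.
attribute [local instance] Matrix.linftyOpNormedAddCommGroup Matrix.linftyOpNormedSpace
  Matrix.linftyOpNormedRing Matrix.linftyOpNormedAlgebra

theorem Matrix.intervalIntegral_apply {m n 𝕜 : Type*} [Fintype m] [Fintype n] [RCLike 𝕜]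
    {f : ℝ → Matrix m n 𝕜} (hf : Continuous f) (a b : ℝ) (i : m) (j : n) :
    (∫ s in a..b, f s) i j = ∫ s in a..b, f s i j :=
  ((entryLinearMap 𝕜 𝕜 i j).toContinuousLinearMap.intervalIntegral_comp_comm
    (hf.intervalIntegrable a b)).symm

/-- For square matrices `A` and `B` and `t : ℝ`,
`e^{-tA} e^{t(A+B)} - I = ∫₀^t e^{-sA} B e^{s(A+B)} ds` (entrywise integral). -/
theorem exp_neg_mul_exp_sub_one {n : ℕ} (A B : Matrix (Fin n) (Fin n) ℂ) (t : ℝ) :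
    exp (-((t : ℂ) • A)) * exp ((t : ℂ) • (A + B)) - 1 =
      Matrix.of (fun i j =>
        ∫ s in (0 : ℝ)..t,
          (exp (-((s : ℂ) • A)) * B * exp ((s : ℂ) • (A + B))) i j) := by
  have hFTC := exp_neg_smul_mul_exp_smul_sub_one A B t
  have hcont := continuous_exp_neg_smul_mul_mul_exp_smul A B (A + B)
  simp only [RCLike.real_smul_eq_coe_smul (K := ℂ)] at hFTC hcont
  refine hFTC.trans ?_
  ext i j
  exact Matrix.intervalIntegral_apply hcont 0 t i j
end

section
/- For a Hermitian positive definite matrix A and any Hermitian matrix Δ, the operators M_A : Δ ↦ ∫₀¹ A^{1-τ} Δ A^{τ} dτ and N_A : Δ ↦ ∫₀^∞ (A+τI)⁻¹ Δ (A+τI)⁻¹ dτ are mutually inverse: M_A(N_A(Δ)) = Δ. -/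
/-!
Diagonalize `A = U diag(λ) U*`. In the eigenbasis both maps are Schur (entrywise) multipliers:
`M_A` multiplies the `(k, l)` entry by `∫₀¹ λₖ^(1-τ) λₗ^τ dτ` and `N_A` by
`∫₀^∞ (λₖ+τ)⁻¹ (λₗ+τ)⁻¹ dτ`. The first integral is the logarithmic mean
`L(λₖ, λₗ) = (λₖ - λₗ) / (log λₖ - log λₗ)`, and the second is `L(λₖ, λₗ)⁻¹`,
because `τ ↦ -L(a + τ, b + τ)⁻¹` is a primitive of `(a + τ)⁻¹ (b + τ)⁻¹` vanishing at infinity.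
So the composite multiplies every entry by `1`.
-/

open MeasureTheory Matrix Real Set Filter Topology
open scoped ComplexOrder

noncomputable def logMean (a b : ℝ) : ℝ :=
  if a = b then a else (a - b) / (log a - log b)

lemma logMean_self (a : ℝ) : logMean a a = a := if_pos rfl

lemma logMean_of_ne {a b : ℝ} (h : a ≠ b) : logMean a b = (a - b) / (log a - log b) := if_neg h

lemma logMean_pos {a b : ℝ} (ha : 0 < a) (hb : 0 < b) : 0 < logMean a b := by
  rcases lt_trichotomy a b with h | rfl | h
  · rw [logMean_of_ne h.ne]
    exact div_pos_of_neg_of_neg (by linarith) (by linarith [log_lt_log ha h])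
  · rwa [logMean_self]
  · rw [logMean_of_ne h.ne']
    exact div_pos (by linarith) (by linarith [log_lt_log hb h])

lemma integral_rpow_one_sub_mul_rpow {a b : ℝ} (ha : 0 < a) (hb : 0 < b) :
    ∫ τ in (0 : ℝ)..1, a ^ (1 - τ) * b ^ τ = logMean a b := by
  rcases eq_or_ne a b with rfl | hab
  · simp [← rpow_add ha, logMean_self]
  have hlog : log b - log a ≠ 0 := sub_ne_zero.2 fun h => hab (log_injOn_pos hb ha h).symm
  have hexp (τ : ℝ) : a ^ (1 - τ) * b ^ τ = exp (log a + (log b - log a) * τ) := by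
    rw [rpow_def_of_pos ha, rpow_def_of_pos hb, ← exp_add]; ring_nf
  simp only [hexp]
  rw [intervalIntegral.integral_comp_add_mul (fun x => exp x) hlog, integral_exp,
    logMean_of_ne hab]
  simp only [mul_zero, add_zero, mul_one, add_sub_cancel, exp_log ha, exp_log hb, smul_eq_mul]
  rw [← neg_sub (log a), ← neg_sub a]
  field_simp

lemma inv_logMean_add_of_ne {a b : ℝ} (hab : a ≠ b) (τ : ℝ) :
    (logMean (a + τ) (b + τ))⁻¹ = (log (a + τ) - log (b + τ)) / (a - b) := by
  rw [logMean_of_ne (by simpa using hab), inv_div, add_sub_add_right_eq_sub]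

lemma hasDerivAt_neg_inv_logMean_add {a b x : ℝ} (ha : 0 < a) (hb : 0 < b) (hx : x ∈ Ici 0) :
    HasDerivAt (fun τ => -(logMean (a + τ) (b + τ))⁻¹) ((a + x)⁻¹ * (b + x)⁻¹) x := by
  have hax : 0 < a + x := by linarith [hx.out]
  have hbx : 0 < b + x := by linarith [hx.out]
  rcases eq_or_ne a b with rfl | hab
  · simp only [logMean_self]
    exact (((hasDerivAt_id' x).const_add a).inv hax.ne').neg.congr_deriv (by field_simp)
  simp only [inv_logMean_add_of_ne hab]
  refine (((((hasDerivAt_id' x).const_add a).log hax.ne').sub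
    (((hasDerivAt_id' x).const_add b).log hbx.ne')).div_const (a - b)).neg.congr_deriv ?_
  have : a - b ≠ 0 := sub_ne_zero.2 hab
  field_simp
  ring

lemma tendsto_neg_inv_logMean_add_atTop (a b : ℝ) :
    Tendsto (fun τ => -(logMean (a + τ) (b + τ))⁻¹) atTop (𝓝 0) := by
  rcases eq_or_ne a b with rfl | hab
  · simpa [logMean_self] using
      (tendsto_inv_atTop_zero.comp (tendsto_atTop_add_const_left _ a tendsto_id)).neg
  simp only [inv_logMean_add_of_ne hab]
  simpa [add_comm] using
    (((tendsto_log_comp_add_sub_log a).sub (tendsto_log_comp_add_sub_log b)).div_const (a - b)).neg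

lemma integrableOn_inv_add_mul_inv_add {a b : ℝ} (ha : 0 < a) (hb : 0 < b) :
    IntegrableOn (fun τ => (a + τ)⁻¹ * (b + τ)⁻¹) (Ioi 0) :=
  integrableOn_Ioi_deriv_of_nonneg' (fun _ hx => hasDerivAt_neg_inv_logMean_add ha hb hx)
    (fun x hx => by have := hx.out; positivity) (tendsto_neg_inv_logMean_add_atTop a b)

lemma integral_Ioi_inv_add_mul_inv_add {a b : ℝ} (ha : 0 < a) (hb : 0 < b) :
    ∫ τ in Ioi (0 : ℝ), (a + τ)⁻¹ * (b + τ)⁻¹ = (logMean a b)⁻¹ := by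
  rw [integral_Ioi_of_hasDerivAt_of_nonneg' (fun _ hx => hasDerivAt_neg_inv_logMean_add ha hb hx)
    (fun x hx => by have := hx.out; positivity) (tendsto_neg_inv_logMean_add_atTop a b)]
  simp

namespace Matrix

variable {l m n o α 𝕜 : Type*} [Fintype m] [Fintype n] [RCLike 𝕜]

lemma diagonal_mul_mul_diagonal [DecidableEq m] [DecidableEq n] [CommSemiring α]
    (d : m → α) (M : Matrix m n α) (e : n → α) :
    diagonal d * M * diagonal e = of (fun i j => d i * e j) ⊙ M := by
  ext i j
  simp only [diagonal_mul, mul_diagonal, hadamard_apply, of_apply]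
  ring

lemma of_integral_mul_hadamard_mul [Fintype l] {β : Type*} [MeasurableSpace β] {μ : Measure β}
    (P : Matrix l m 𝕜) (κ : β → m → n → ℝ) (C : Matrix m n 𝕜) (Q : Matrix n o 𝕜)
    (hκ : ∀ i j, Integrable (fun t => κ t i j) μ) :
    of (fun i j => ∫ t, (P * (of (fun k l => (κ t k l : 𝕜)) ⊙ C) * Q) i j ∂μ) =
      P * (of (fun k l => ((∫ t, κ t k l ∂μ : ℝ) : 𝕜)) ⊙ C) * Q := by
  ext i j
  have hint : ∀ k l, Integrable (fun t => P i k * ((κ t k l : 𝕜) * C k l) * Q l j) μ :=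
    fun k l => (((hκ k l).ofReal.mul_const _).const_mul _).mul_const _
  simp only [of_apply, mul_apply, hadamard_apply, Finset.sum_mul]
  rw [integral_finsetSum _ fun l _ => integrable_finsetSum _ fun k _ => hint k l]
  refine Finset.sum_congr rfl fun l _ => ?_
  rw [integral_finsetSum _ fun k _ => hint k l]
  refine Finset.sum_congr rfl fun k _ => ?_
  rw [integral_mul_const, integral_const_mul, integral_mul_const, integral_ofReal]

namespace IsHermitian

variable [DecidableEq m] {A : Matrix m m 𝕜} (hA : A.IsHermitian)

noncomputable def eigenSchurMul (K : m → m → ℝ) (X : Matrix m m 𝕜) : Matrix m m 𝕜 :=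
  Unitary.conjStarAlgAut 𝕜 _ hA.eigenvectorUnitary
    (of (fun i j => (K i j : 𝕜)) ⊙
      (Unitary.conjStarAlgAut 𝕜 _ hA.eigenvectorUnitary).symm X)

lemma cfc_mul_mul_cfc (f g : ℝ → ℝ) (X : Matrix m m 𝕜) :
    hA.cfc f * X * hA.cfc g =
      hA.eigenSchurMul (fun i j => f (hA.eigenvalues i) * g (hA.eigenvalues j)) X := by
  have hkernel : of (fun i j => ((f (hA.eigenvalues i) * g (hA.eigenvalues j) : ℝ) : 𝕜)) =
      of (fun i j => (RCLike.ofReal ∘ f ∘ hA.eigenvalues) i *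
        (RCLike.ofReal ∘ g ∘ hA.eigenvalues) j) := by
    ext; simp
  rw [eigenSchurMul, hkernel, ← diagonal_mul_mul_diagonal, map_mul, map_mul,
    StarAlgEquiv.apply_symm_apply, IsHermitian.cfc, IsHermitian.cfc]

lemma eigenSchurMul_eigenSchurMul (K K' : m → m → ℝ) (X : Matrix m m 𝕜) :
    hA.eigenSchurMul K (hA.eigenSchurMul K' X) =
      hA.eigenSchurMul (fun i j => K i j * K' i j) X := by
  have hkernel : of (fun i j => (K i j : 𝕜)) ⊙ of (fun i j => (K' i j : 𝕜)) =
      of (fun i j => ((K i j * K' i j : ℝ) : 𝕜)) := by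
    ext; simp
  rw [eigenSchurMul, eigenSchurMul, StarAlgEquiv.symm_apply_apply, ← hadamard_assoc, hkernel,
    eigenSchurMul]

lemma eigenSchurMul_one (X : Matrix m m 𝕜) : hA.eigenSchurMul (fun _ _ => 1) X = X := by
  simp only [eigenSchurMul, RCLike.ofReal_one]
  exact (congrArg _ (of_one_hadamard _)).trans (StarAlgEquiv.apply_symm_apply _ X)

lemma of_integral_eigenSchurMul {β : Type*} [MeasurableSpace β] {μ : Measure β}
    (κ : β → m → m → ℝ) (X : Matrix m m 𝕜) (hκ : ∀ i j, Integrable (fun t => κ t i j) μ) :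
    of (fun i j => ∫ t, (hA.eigenSchurMul (κ t) X) i j ∂μ) =
      hA.eigenSchurMul (fun i j => ∫ t, κ t i j ∂μ) X :=
  of_integral_mul_hadamard_mul _ κ _ _ hκ

end IsHermitian

lemma PosSemidef.inv_add_smul_one [DecidableEq m] {A : Matrix m m 𝕜} (hA : A.PosSemidef)
    {τ : ℝ} (hτ : 0 < τ) : (A + (τ : 𝕜) • 1)⁻¹ = hA.1.cfc (fun x => (x + τ)⁻¹) := by
  have hspec : ∀ x ∈ spectrum ℝ A, x + τ ≠ 0 := by
    rw [hA.1.spectrum_real_eq_range_eigenvalues]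
    rintro _ ⟨i, rfl⟩
    exact (add_pos_of_nonneg_of_pos (hA.eigenvalues_nonneg i) hτ).ne'
  have hsa : IsSelfAdjoint A := hA.1
  rw [← hA.1.cfc_eq, cfc_inv (fun x => x + τ) A hspec, cfc_add_const τ (fun x => x) A,
    cfc_id' (R := ℝ) (a := A), nonsing_inv_eq_ringInverse, Algebra.algebraMap_eq_smul_one]
  simp

namespace PosDef

variable [DecidableEq m] {A : Matrix m m 𝕜} (hA : A.PosDef)

lemma of_integral_resolvent_mul_mul_resolvent (X : Matrix m m 𝕜) :
    of (fun i j => ∫ τ in Ioi (0 : ℝ),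
      ((A + (τ : 𝕜) • 1)⁻¹ * X * (A + (τ : 𝕜) • 1)⁻¹) i j) =
      hA.1.eigenSchurMul
        (fun k l => (logMean (hA.1.eigenvalues k) (hA.1.eigenvalues l))⁻¹) X := by
  have h := hA.1.of_integral_eigenSchurMul (μ := volume.restrict (Ioi 0))
    (fun τ k l => (hA.1.eigenvalues k + τ)⁻¹ * (hA.1.eigenvalues l + τ)⁻¹) X
    fun k l => integrableOn_inv_add_mul_inv_add (hA.eigenvalues_pos k) (hA.eigenvalues_pos l)
  simp only [integral_Ioi_inv_add_mul_inv_add (hA.eigenvalues_pos _) (hA.eigenvalues_pos _)]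
    at h
  refine Eq.trans (congrArg of (funext₂ fun i j => setIntegral_congr_fun measurableSet_Ioi
    fun τ hτ => ?_)) h
  rw [hA.posSemidef.inv_add_smul_one hτ, IsHermitian.cfc_mul_mul_cfc]

lemma of_integral_cfc_rpow_mul_mul_cfc_rpow (X : Matrix m m 𝕜) :
    of (fun i j => ∫ τ in (0 : ℝ)..1,
      (hA.1.cfc (fun x => x ^ (1 - τ)) * X * hA.1.cfc (fun x => x ^ τ)) i j) =
      hA.1.eigenSchurMul (fun k l => logMean (hA.1.eigenvalues k) (hA.1.eigenvalues l)) X := by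
  have hint (k l : m) : IntegrableOn
      (fun τ => hA.1.eigenvalues k ^ (1 - τ) * hA.1.eigenvalues l ^ τ) (Ioc (0 : ℝ) 1) := by
    have hk := hA.eigenvalues_pos k
    have hl := hA.eigenvalues_pos l
    exact Continuous.integrableOn_Ioc (by fun_prop (disch := positivity))
  have h := hA.1.of_integral_eigenSchurMul (μ := volume.restrict (Ioc (0 : ℝ) 1))
    (fun τ k l => hA.1.eigenvalues k ^ (1 - τ) * hA.1.eigenvalues l ^ τ) X hint
  simp only [← intervalIntegral.integral_of_le (zero_le_one' ℝ),
    integral_rpow_one_sub_mul_rpow (hA.eigenvalues_pos _) (hA.eigenvalues_pos _)] at h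
  refine Eq.trans (congrArg of (funext₂ fun i j => intervalIntegral.integral_congr
    fun τ _ => ?_)) h
  rw [IsHermitian.cfc_mul_mul_cfc]

end PosDef

end Matrix

theorem scrambled_mul_inverse_general {n : ℕ} (A : Matrix (Fin n) (Fin n) ℂ) (hA : A.PosDef)
    (Δ : Matrix (Fin n) (Fin n) ℂ) :
    (fun X : Matrix (Fin n) (Fin n) ℂ =>
        Matrix.of (fun i j =>
          ∫ τ in (0 : ℝ)..1,
            (hA.1.cfc (fun x => x ^ ((1 : ℝ) - τ)) * X *
              hA.1.cfc (fun x => x ^ τ)) i j))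
      (Matrix.of (fun i j =>
        ∫ τ in Set.Ioi (0 : ℝ),
          ((A + (τ : ℂ) • (1 : Matrix (Fin n) (Fin n) ℂ))⁻¹ * Δ *
            (A + (τ : ℂ) • (1 : Matrix (Fin n) (Fin n) ℂ))⁻¹) i j)) = Δ := by
  have hN := hA.of_integral_resolvent_mul_mul_resolvent Δ
  -- the statement's `(τ : ℂ)` is `Complex.ofReal τ`, the lemma's `(τ : 𝕜)` is `RCLike.ofReal τ`
  rw [RCLike.ofReal_eq_complex_ofReal] at hN
  have hkernel : (fun k l => logMean (hA.1.eigenvalues k) (hA.1.eigenvalues l) *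
      (logMean (hA.1.eigenvalues k) (hA.1.eigenvalues l))⁻¹) = fun _ _ => 1 := by
    ext k l
    exact mul_inv_cancel₀ (logMean_pos (hA.eigenvalues_pos k) (hA.eigenvalues_pos l)).ne'
  beta_reduce
  rw [hN, hA.of_integral_cfc_rpow_mul_mul_cfc_rpow, IsHermitian.eigenSchurMul_eigenSchurMul,
    hkernel, IsHermitian.eigenSchurMul_one]

/-- For a Hermitian positive definite matrix `A` and any Hermitian matrix `Δ`,
the operators `M_A : Δ ↦ ∫₀¹ A^{1-τ} Δ A^{τ} dτ` and
`N_A : Δ ↦ ∫₀^∞ (A+τI)⁻¹ Δ (A+τI)⁻¹ dτ` are mutually inverse: `M_A (N_A Δ) = Δ`. -/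
theorem scrambled_mul_inverse {n : ℕ} (A : Matrix (Fin n) (Fin n) ℂ) (hA : A.PosDef)
    (Δ : Matrix (Fin n) (Fin n) ℂ) (hΔ : Δ.IsHermitian) :
    (fun X : Matrix (Fin n) (Fin n) ℂ =>
        Matrix.of (fun i j =>
          ∫ τ in (0 : ℝ)..1,
            (hA.1.cfc (fun x => x ^ ((1 : ℝ) - τ)) * X *
              hA.1.cfc (fun x => x ^ τ)) i j))
      (Matrix.of (fun i j =>
        ∫ τ in Set.Ioi (0 : ℝ),
          ((A + (τ : ℂ) • (1 : Matrix (Fin n) (Fin n) ℂ))⁻¹ * Δ *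
            (A + (τ : ℂ) • (1 : Matrix (Fin n) (Fin n) ℂ))⁻¹) i j)) = Δ :=
  scrambled_mul_inverse_general A hA Δ
end

section
/- For a Hermitian positive definite matrix ρ and any Hermitian matrix δ, trace(ρ · ∫₀^∞ (ρ+tI)⁻¹ δ (ρ+tI)⁻¹ dt) = trace(δ). -/
/-!
Conjugating by the eigenvector unitary of `ρ` commutes with the resolvents `(ρ + t)⁻¹`, with
taking entrywise integrals and with the trace, so it suffices to treat `ρ = diag λ` with `λ > 0`.
There the `(i, j)` entry of the integrand is `δᵢⱼ (λᵢ + t)⁻¹ (λⱼ + t)⁻¹`, which is integrable on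
`(0, ∞)`, and the diagonal entries integrate to `δᵢᵢ / λᵢ`; multiplying by `diag λ` and taking
the trace leaves `∑ δᵢᵢ`.
-/

open MeasureTheory Matrix
open scoped ComplexOrder
open Filter Unitary

section ResolventIntegrals

variable {a b : ℝ}

lemma hasDerivAt_neg_inv_add {x : ℝ} (hx : a + x ≠ 0) :
    HasDerivAt (fun t : ℝ => -(a + t)⁻¹) ((a + x)⁻¹ * (a + x)⁻¹) x :=
  (((hasDerivAt_id x).const_add a).inv hx).neg.congr_deriv
    (by rw [neg_div, neg_neg, one_div, sq, mul_inv, id])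

lemma tendsto_neg_inv_add_atTop : Tendsto (fun t : ℝ => -(a + t)⁻¹) atTop (nhds 0) := by
  simpa using (tendsto_inv_atTop_zero.comp (tendsto_atTop_add_const_left _ a tendsto_id)).neg

lemma integrableOn_Ioi_inv_add_mul_self (ha : 0 < a) :
    IntegrableOn (fun t : ℝ => (a + t)⁻¹ * (a + t)⁻¹) (Set.Ioi 0) :=
  integrableOn_Ioi_deriv_of_nonneg'
    (fun _ hx => hasDerivAt_neg_inv_add (add_pos_of_pos_of_nonneg ha hx).ne')
    (fun _ _ => mul_self_nonneg _) tendsto_neg_inv_add_atTop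

lemma integral_Ioi_inv_add_mul_self (ha : 0 < a) :
    ∫ t in Set.Ioi (0 : ℝ), (a + t)⁻¹ * (a + t)⁻¹ = a⁻¹ := by
  rw [integral_Ioi_of_hasDerivAt_of_nonneg'
    (fun _ hx => hasDerivAt_neg_inv_add (add_pos_of_pos_of_nonneg ha hx).ne')
    (fun _ _ => mul_self_nonneg _) tendsto_neg_inv_add_atTop]
  simp

lemma integrableOn_Ioi_inv_add_mul_inv_add (ha : 0 < a) (hb : 0 < b) :
    IntegrableOn (fun t : ℝ => (a + t)⁻¹ * (b + t)⁻¹) (Set.Ioi 0) := by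
  refine ((integrableOn_Ioi_inv_add_mul_self ha).add
    (integrableOn_Ioi_inv_add_mul_self hb)).mono'
    (by fun_prop : Measurable fun t : ℝ => (a + t)⁻¹ * (b + t)⁻¹).aestronglyMeasurable ?_
  filter_upwards [ae_restrict_mem measurableSet_Ioi] with t (ht : 0 < t)
  rw [Real.norm_eq_abs, abs_of_pos (by positivity), Pi.add_apply]
  nlinarith [sq_nonneg ((a + t)⁻¹ - (b + t)⁻¹)]

end ResolventIntegrals

namespace Matrix

section EntrywiseIntegral

variable {α l m n o 𝕜 : Type*} [MeasurableSpace α] {μ : Measure α} [RCLike 𝕜]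
  [Fintype m] [Fintype n] {F : α → Matrix m n 𝕜}

lemma of_integral_mul_mul (hF : ∀ i j, Integrable (fun x => F x i j) μ)
    (A : Matrix l m 𝕜) (B : Matrix n o 𝕜) :
    of (fun i j => ∫ x, (A * F x * B) i j ∂μ) = A * of (fun i j => ∫ x, F x i j ∂μ) * B := by
  ext i j
  simp only [of_apply, mul_apply, Finset.sum_mul]
  rw [integral_finsetSum _ fun k _ => integrable_finsetSum _ fun k' _ =>
    ((hF k' k).const_mul _).mul_const _]
  refine Finset.sum_congr rfl fun k _ => ?_
  rw [integral_finsetSum _ fun k' _ => ((hF k' k).const_mul _).mul_const _]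
  refine Finset.sum_congr rfl fun k' _ => ?_
  rw [integral_mul_const, integral_const_mul]

end EntrywiseIntegral

section UnitaryConjugation

variable {n R : Type*} [Fintype n] [DecidableEq n] [CommRing R] [StarRing R]
  (U : unitary (Matrix n n R)) (M : Matrix n n R)

lemma trace_conjStarAlgAut : trace (conjStarAlgAut R _ U M) = trace M := by
  rw [conjStarAlgAut_apply, trace_mul_cycle, coe_star_mul_self, one_mul]

lemma conjStarAlgAut_inv : conjStarAlgAut R _ U M⁻¹ = (conjStarAlgAut R _ U M)⁻¹ := by
  have hU : (U : Matrix n n R)⁻¹ = star (U : Matrix n n R) :=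
    inv_eq_right_inv (mul_star_self_of_mem U.2)
  have hU' : (star (U : Matrix n n R))⁻¹ = U := inv_eq_right_inv (star_mul_self_of_mem U.2)
  rw [conjStarAlgAut_apply, conjStarAlgAut_apply, mul_inv_rev, mul_inv_rev, hU, hU', mul_assoc]

end UnitaryConjugation

variable {n 𝕜 : Type*} [Fintype n] [DecidableEq n] [RCLike 𝕜]

noncomputable def resolventSandwich (A X : Matrix n n 𝕜) (t : ℝ) : Matrix n n 𝕜 :=
  (A + (t : 𝕜) • 1)⁻¹ * X * (A + (t : 𝕜) • 1)⁻¹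

lemma resolventSandwich_conjStarAlgAut (U : unitary (Matrix n n 𝕜)) (A X : Matrix n n 𝕜)
    (t : ℝ) :
    resolventSandwich (conjStarAlgAut 𝕜 _ U A) (conjStarAlgAut 𝕜 _ U X) t =
      conjStarAlgAut 𝕜 _ U (resolventSandwich A X t) := by
  simp only [resolventSandwich, map_mul, conjStarAlgAut_inv, map_add, map_smul, map_one]

section Diagonal

variable {d : n → ℝ}

lemma inv_diagonal_add_smul_one {t : ℝ} (ht : ∀ i, d i + t ≠ 0) :
    (diagonal (fun i => (d i : 𝕜)) + (t : 𝕜) • 1)⁻¹ =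
      diagonal fun i => (((d i + t)⁻¹ : ℝ) : 𝕜) := by
  refine inv_eq_right_inv ?_
  rw [smul_one_eq_diagonal, diagonal_add, diagonal_mul_diagonal, ← diagonal_one]
  congr 1
  ext i
  rw [← RCLike.ofReal_add, ← RCLike.ofReal_mul, mul_inv_cancel₀ (ht i), RCLike.ofReal_one]

lemma resolventSandwich_diagonal_apply (Y : Matrix n n 𝕜) {t : ℝ} (ht : ∀ i, d i + t ≠ 0)
    (i j : n) :
    resolventSandwich (diagonal fun i => (d i : 𝕜)) Y t i j =
      Y i j * (((d i + t)⁻¹ * (d j + t)⁻¹ : ℝ) : 𝕜) := by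
  rw [resolventSandwich, inv_diagonal_add_smul_one ht]
  simp only [mul_diagonal, diagonal_mul, RCLike.ofReal_mul]
  ring

lemma integrableOn_resolventSandwich_diagonal_apply (hd : ∀ i, 0 < d i) (Y : Matrix n n 𝕜)
    (i j : n) :
    IntegrableOn (fun t => resolventSandwich (diagonal fun i => (d i : 𝕜)) Y t i j)
      (Set.Ioi 0) := by
  refine IntegrableOn.congr_fun (((integrableOn_Ioi_inv_add_mul_inv_add (hd i) (hd j)).ofReal
    (𝕜 := 𝕜)).const_mul (Y i j)) (fun t (ht : 0 < t) => ?_) measurableSet_Ioi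
  rw [resolventSandwich_diagonal_apply Y fun k => (add_pos (hd k) ht).ne']

lemma integral_resolventSandwich_diagonal_apply_self (hd : ∀ i, 0 < d i) (Y : Matrix n n 𝕜)
    (i : n) :
    ∫ t in Set.Ioi (0 : ℝ), resolventSandwich (diagonal fun i => (d i : 𝕜)) Y t i i =
      Y i i * ((d i)⁻¹ : ℝ) := by
  rw [setIntegral_congr_fun measurableSet_Ioi fun t (ht : 0 < t) =>
    resolventSandwich_diagonal_apply Y (fun k => (add_pos (hd k) ht).ne') i i,
    integral_const_mul, integral_ofReal, integral_Ioi_inv_add_mul_self (hd i)]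

lemma trace_diagonal_mul_integral_resolventSandwich (hd : ∀ i, 0 < d i) (Y : Matrix n n 𝕜) :
    trace (diagonal (fun i => (d i : 𝕜)) * of fun i j =>
      ∫ t in Set.Ioi (0 : ℝ), resolventSandwich (diagonal fun i => (d i : 𝕜)) Y t i j) =
      trace Y := by
  simp only [trace, diag_apply, diagonal_mul, of_apply,
    integral_resolventSandwich_diagonal_apply_self hd Y]
  refine Finset.sum_congr rfl fun i _ => ?_
  rw [mul_left_comm, ← RCLike.ofReal_mul, mul_inv_cancel₀ (hd i).ne', RCLike.ofReal_one, mul_one]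

end Diagonal

lemma trace_mul_integral_resolventSandwich_conjStarAlgAut (U : unitary (Matrix n n 𝕜))
    {A X : Matrix n n 𝕜}
    (hint : ∀ i j, IntegrableOn (fun t => resolventSandwich A X t i j) (Set.Ioi 0)) :
    trace (conjStarAlgAut 𝕜 _ U A * of fun i j => ∫ t in Set.Ioi (0 : ℝ),
      resolventSandwich (conjStarAlgAut 𝕜 _ U A) (conjStarAlgAut 𝕜 _ U X) t i j) =
    trace (A * of fun i j => ∫ t in Set.Ioi (0 : ℝ), resolventSandwich A X t i j) := by
  have hconj : (of fun i j => ∫ t in Set.Ioi (0 : ℝ),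
      conjStarAlgAut 𝕜 _ U (resolventSandwich A X t) i j) =
      conjStarAlgAut 𝕜 _ U (of fun i j => ∫ t in Set.Ioi (0 : ℝ), resolventSandwich A X t i j) :=
    of_integral_mul_mul hint _ _
  simp only [resolventSandwich_conjStarAlgAut, hconj, ← map_mul, trace_conjStarAlgAut]

theorem PosDef.trace_mul_integral_resolventSandwich {A : Matrix n n 𝕜} (hA : A.PosDef)
    (X : Matrix n n 𝕜) :
    trace (A * of fun i j => ∫ t in Set.Ioi (0 : ℝ), resolventSandwich A X t i j) = trace X := by
  rw [hA.1.spectral_theorem, Function.comp_def,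
    ← (conjStarAlgAut 𝕜 _ hA.1.eigenvectorUnitary).apply_symm_apply X,
    trace_mul_integral_resolventSandwich_conjStarAlgAut _
      (integrableOn_resolventSandwich_diagonal_apply hA.eigenvalues_pos _),
    trace_diagonal_mul_integral_resolventSandwich hA.eigenvalues_pos, trace_conjStarAlgAut]

end Matrix

theorem trace_rho_scrambled_inv_general {n : ℕ} (ρ δ : Matrix (Fin n) (Fin n) ℂ)
    (hρ : ρ.PosDef) :
    (ρ * Matrix.of (fun i j =>
      ∫ t in Set.Ioi (0 : ℝ),
        ((ρ + (t : ℂ) • (1 : Matrix (Fin n) (Fin n) ℂ))⁻¹ * δ *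
          (ρ + (t : ℂ) • (1 : Matrix (Fin n) (Fin n) ℂ))⁻¹) i j)).trace = δ.trace :=
  hρ.trace_mul_integral_resolventSandwich δ

/-- For a Hermitian positive definite matrix `ρ` and any Hermitian matrix `δ`,
`trace (ρ · ∫₀^∞ (ρ+tI)⁻¹ δ (ρ+tI)⁻¹ dt) = trace δ`. -/
theorem trace_rho_scrambled_inv {n : ℕ} (ρ δ : Matrix (Fin n) (Fin n) ℂ)
    (hρ : ρ.PosDef) (hδ : δ.IsHermitian) :
    (ρ * Matrix.of (fun i j =>
      ∫ t in Set.Ioi (0 : ℝ),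
        ((ρ + (t : ℂ) • (1 : Matrix (Fin n) (Fin n) ℂ))⁻¹ * δ *
          (ρ + (t : ℂ) • (1 : Matrix (Fin n) (Fin n) ℂ))⁻¹) i j)).trace = δ.trace :=
  trace_rho_scrambled_inv_general ρ δ hρ
end

section
/- For λ with L*(λ) ≻ 0, the quadratic form of the Jacobian ∇h|_λ satisfies ⟨δ, ∇h|_λ(δ)⟩ = ‖L*(λ)^{-1/2} L*(δ) L*(λ)^{-1/2}‖² ≥ 0, with equality iff L*(δ) = 0; in particular ∇h|_λ is positive definite on the orthogonal complement of ker L*. -/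
/-!
`L*` is the adjoint of `L` for the real inner product `Re tr(Xᴴ Y)` against Hermitian arguments,
so with `A = L*(λ)`, `D = L*(δ)` the quadratic form is `Re tr(D A⁻¹ D A⁻¹)`. Writing `A⁻¹ = S²`
with `S = A^{-1/2}` Hermitian and invertible, cycling the trace turns this into
`tr((S D S)ᴴ (S D S)) = ‖S D S‖²`, which vanishes exactly when `S D S = 0`, i.e. when `D = 0`.
-/

open scoped ComplexOrder
open Matrix

/-- The real-linear map `L : ρ ↦ Σ_k G_left k * ρ * G_right k`. -/
noncomputable def Lmap {N p q m : ℕ} (Gl : Fin N → Matrix (Fin p) (Fin m) ℂ)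
    (Gr : Fin N → Matrix (Fin m) (Fin q) ℂ) (ρ : Matrix (Fin m) (Fin m) ℂ) :
    Matrix (Fin p) (Fin q) ℂ :=
  ∑ k, Gl k * ρ * Gr k

/-- The claimed adjoint `L* : λ ↦ (Σ_k (G_left k)* λ (G_right k)*)_Herm`,
where `(M)_Herm = (M + M*)/2`. -/
noncomputable def Lstar {N p q m : ℕ} (Gl : Fin N → Matrix (Fin p) (Fin m) ℂ)
    (Gr : Fin N → Matrix (Fin m) (Fin q) ℂ) (lam : Matrix (Fin p) (Fin q) ℂ) :
    Matrix (Fin m) (Fin m) ℂ :=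
  ((1 : ℂ) / 2) • ((∑ k, (Gl k)ᴴ * lam * (Gr k)ᴴ) + (∑ k, (Gl k)ᴴ * lam * (Gr k)ᴴ)ᴴ)

namespace Matrix

section RCLike

variable {𝕜 : Type*} [RCLike 𝕜] {m n : Type*} [Fintype m] [Fintype n]

lemma re_trace_conjTranspose_mul_self_nonneg (X : Matrix m n 𝕜) :
    0 ≤ RCLike.re (Xᴴ * X).trace :=
  (RCLike.nonneg_iff.mp (posSemidef_conjTranspose_mul_self X).trace_nonneg).1

lemma re_trace_conjTranspose_mul_self_eq_zero_iff {X : Matrix m n 𝕜} :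
    RCLike.re (Xᴴ * X).trace = 0 ↔ X = 0 := by
  have him : RCLike.im (Xᴴ * X).trace = 0 :=
    (RCLike.nonneg_iff.mp (posSemidef_conjTranspose_mul_self X).trace_nonneg).2
  rw [← trace_conjTranspose_mul_self_eq_zero_iff, RCLike.ext_iff (K := 𝕜)]
  simp [him]

lemma re_trace_conjTranspose_mul_of_isHermitian (M : Matrix n n 𝕜) {ρ : Matrix n n 𝕜}
    (hρ : ρ.IsHermitian) : RCLike.re (Mᴴ * ρ).trace = RCLike.re (M * ρ).trace := by
  rw [← hρ.eq, ← conjTranspose_mul, trace_conjTranspose, RCLike.star_def, RCLike.conj_re,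
    hρ.eq, trace_mul_comm]

variable [DecidableEq n]

lemma IsHermitian.isHermitian_cfc {A : Matrix n n 𝕜} (hA : A.IsHermitian) (f : ℝ → ℝ) :
    (hA.cfc f).IsHermitian := by
  rw [← hA.cfc_eq]
  exact cfc_predicate f A

lemma PosDef.cfc_inv_sqrt_mul_self {A : Matrix n n 𝕜} (hA : A.PosDef) :
    hA.1.cfc (fun x => (Real.sqrt x)⁻¹) * hA.1.cfc (fun x => (Real.sqrt x)⁻¹) = A⁻¹ := by
  have hcont (f : ℝ → ℝ) : ContinuousOn f (spectrum ℝ A) := by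
    rw [continuousOn_iff_continuous_domRestrict]
    fun_prop
  rw [← hA.1.cfc_eq, ← cfc_mul _ _ A (hcont _) (hcont _), nonsing_inv_eq_ringInverse,
    ← cfc_ringInverse_id (R := ℝ) A hA.isUnit hA.1.isSelfAdjoint]
  refine cfc_congr fun x hx => ?_
  obtain ⟨i, rfl⟩ := hA.1.spectrum_real_eq_range_eigenvalues ▸ hx
  rw [← mul_inv, Real.mul_self_sqrt (hA.eigenvalues_pos i).le]

end RCLike

lemma IsHermitian.trace_conjTranspose_mul_self_sandwich {R : Type*} [CommRing R] [StarRing R]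
    {n : Type*} [Fintype n] {S D : Matrix n n R} (hS : S.IsHermitian) (hD : D.IsHermitian) :
    ((S * D * S)ᴴ * (S * D * S)).trace = (D * (S * S) * D * (S * S)).trace := by
  simp only [conjTranspose_mul, hS.eq, hD.eq, Matrix.mul_assoc]
  rw [trace_mul_comm]
  simp only [Matrix.mul_assoc]

end Matrix

section MatricialMoments

variable {N p q m : ℕ} (Gl : Fin N → Matrix (Fin p) (Fin m) ℂ)
  (Gr : Fin N → Matrix (Fin m) (Fin q) ℂ)

lemma Lstar_isHermitian (δ : Matrix (Fin p) (Fin q) ℂ) : (Lstar Gl Gr δ).IsHermitian := by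
  simp [Lstar, Matrix.IsHermitian, conjTranspose_smul, add_comm]

lemma trace_conjTranspose_mul_Lmap (δ : Matrix (Fin p) (Fin q) ℂ) (ρ : Matrix (Fin m) (Fin m) ℂ) :
    (δᴴ * Lmap Gl Gr ρ).trace = ((∑ k, (Gl k)ᴴ * δ * (Gr k)ᴴ)ᴴ * ρ).trace := by
  rw [Lmap, Matrix.mul_sum, trace_sum, conjTranspose_sum, Finset.sum_mul, trace_sum]
  refine Finset.sum_congr rfl fun k _ => ?_
  rw [conjTranspose_mul, conjTranspose_mul, conjTranspose_conjTranspose,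
    conjTranspose_conjTranspose, ← Matrix.mul_assoc, ← Matrix.mul_assoc, trace_mul_cycle]

lemma re_trace_conjTranspose_mul_Lmap (δ : Matrix (Fin p) (Fin q) ℂ)
    {ρ : Matrix (Fin m) (Fin m) ℂ} (hρ : ρ.IsHermitian) :
    ((δᴴ * Lmap Gl Gr ρ).trace).re = ((Lstar Gl Gr δ * ρ).trace).re := by
  have hM := re_trace_conjTranspose_mul_of_isHermitian (∑ k, (Gl k)ᴴ * δ * (Gr k)ᴴ) hρ
  rw [trace_conjTranspose_mul_Lmap, Lstar, smul_mul_assoc, add_mul, trace_smul, trace_add,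
    smul_eq_mul]
  simp only [RCLike.re_to_complex] at hM
  simp [Complex.mul_re, hM]
  ring

end MatricialMoments

/-- for `λ` with `L*(λ) ≻ 0`, the quadratic form of the Jacobian
`∇h|_λ(δ) = L(L*(λ)⁻¹ L*(δ) L*(λ)⁻¹)` satisfies
`⟨δ, ∇h|_λ(δ)⟩ = ‖L*(λ)^{-1/2} L*(δ) L*(λ)^{-1/2}‖² ≥ 0` with equality iff `L*(δ) = 0`. -/
theorem jacobian_quadratic_form {N p q m : ℕ} (Gl : Fin N → Matrix (Fin p) (Fin m) ℂ)
    (Gr : Fin N → Matrix (Fin m) (Fin q) ℂ) (lam : Matrix (Fin p) (Fin q) ℂ)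
    (hpos : (Lstar Gl Gr lam).PosDef) (δ : Matrix (Fin p) (Fin q) ℂ) :
    ((δᴴ * Lmap Gl Gr ((Lstar Gl Gr lam)⁻¹ * Lstar Gl Gr δ * (Lstar Gl Gr lam)⁻¹)).trace).re =
        ((((hpos.1.cfc fun x => (Real.sqrt x)⁻¹) * Lstar Gl Gr δ *
            (hpos.1.cfc fun x => (Real.sqrt x)⁻¹))ᴴ *
          ((hpos.1.cfc fun x => (Real.sqrt x)⁻¹) * Lstar Gl Gr δ *
            (hpos.1.cfc fun x => (Real.sqrt x)⁻¹))).trace).re ∧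
      0 ≤ ((δᴴ * Lmap Gl Gr
            ((Lstar Gl Gr lam)⁻¹ * Lstar Gl Gr δ * (Lstar Gl Gr lam)⁻¹)).trace).re ∧
      (((δᴴ * Lmap Gl Gr
            ((Lstar Gl Gr lam)⁻¹ * Lstar Gl Gr δ * (Lstar Gl Gr lam)⁻¹)).trace).re = 0 ↔
        Lstar Gl Gr δ = 0) := by
  set A := Lstar Gl Gr lam
  set D := Lstar Gl Gr δ
  set S := hpos.1.cfc fun x => (Real.sqrt x)⁻¹
  have hD : D.IsHermitian := Lstar_isHermitian Gl Gr δ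
  have hSh : S.IsHermitian := hpos.1.isHermitian_cfc _
  have hSS : S * S = A⁻¹ := hpos.cfc_inv_sqrt_mul_self
  have hS : IsUnit S := isUnit_of_mul_isUnit_left (x := S) (y := S) <| by
    rw [hSS]
    exact isUnit_nonsing_inv_iff.mpr hpos.isUnit
  have hρ : (S * S * D * (S * S)).IsHermitian := by
    simpa only [conjTranspose_mul, hSh.eq] using isHermitian_mul_mul_conjTranspose (S * S) hD
  have hquad : ((δᴴ * Lmap Gl Gr (A⁻¹ * D * A⁻¹)).trace).re =
      (((S * D * S)ᴴ * (S * D * S)).trace).re := by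
    rw [← hSS, re_trace_conjTranspose_mul_Lmap Gl Gr δ hρ,
      hSh.trace_conjTranspose_mul_self_sandwich hD]
    simp only [D, Matrix.mul_assoc]
  rw [hquad, ← RCLike.re_to_complex]
  refine ⟨rfl, re_trace_conjTranspose_mul_self_nonneg _, ?_⟩
  rw [re_trace_conjTranspose_mul_self_eq_zero_iff, hS.mul_left_eq_zero,
    hS.mul_right_eq_zero]
end

section
/- The function ρ ↦ trace(ρ log ρ) is strictly convex on the cone of Hermitian positive definite m×m matrices. -/
/-!
Let `ρ = a • A + b • B` and let `V` be a unitary diagonalizing `ρ`. For a Hermitian `A` with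
eigenvector unitary `U`, the real diagonal of `V* A V` is `P λ(A)`, where `λ(A)` are the
eigenvalues of `A` and `P = (|(V* U)ₖᵢ|²)` is doubly stochastic. Jensen's inequality row by row,
summed using the column sums of `P`, gives Peierls' inequality `∑ₖ f ((V* A V)ₖₖ) ≤ tr f(A)` for
convex `f`; for strictly convex `f` it is strict unless `V* A V` is diagonal. Writing `αₖ, βₖ`
for the diagonals of `V* A V, V* B V`, the eigenvalues of `ρ` are `a αₖ + b βₖ`, so
`tr f(ρ) ≤ a ∑ f(αₖ) + b ∑ f(βₖ) ≤ a tr f(A) + b tr f(B)`. The first step is strict when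
`α ≠ β`; when `α = β`, the matrices `V* A V ≠ V* B V` cannot both be diagonal, so the second
step is strict. Apply this to `f x = x log x`.
-/

open Matrix
open scoped ComplexOrder

/-- `ρ ↦ trace (ρ log ρ)` (via the spectral matrix logarithm), extended by junk
off the Hermitian matrices. -/
noncomputable def traceRhoLogRho {m : ℕ} (ρ : Matrix (Fin m) (Fin m) ℂ) : ℝ :=
  if h : ρ.IsHermitian then ((ρ * h.cfc Real.log).trace).re else 0

open Finset

section Stochastic

variable {n : Type*} [Fintype n] [DecidableEq n] {s : Set ℝ} {f : ℝ → ℝ} {P : Matrix n n ℝ}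
  {x : n → ℝ}

theorem Convex.mulVec_apply_mem (hs : Convex ℝ s) (hP : P ∈ rowStochastic ℝ n)
    (hx : ∀ i, x i ∈ s) (k : n) : (P *ᵥ x) k ∈ s := by
  simpa [mulVec, dotProduct] using hs.sum_mem (t := univ) (w := P k) (z := x)
    (fun i _ => nonneg_of_mem_rowStochastic hP) (sum_row_of_mem_rowStochastic hP k)
    (fun i _ => hx i)

theorem ConvexOn.map_mulVec_apply_le (hf : ConvexOn ℝ s f) (hP : P ∈ rowStochastic ℝ n)
    (hx : ∀ i, x i ∈ s) (k : n) : f ((P *ᵥ x) k) ≤ (P *ᵥ (f ∘ x)) k := by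
  simpa [mulVec, dotProduct] using hf.map_sum_le (t := univ) (w := P k) (p := x)
    (fun i _ => nonneg_of_mem_rowStochastic hP) (sum_row_of_mem_rowStochastic hP k)
    (fun i _ => hx i)

theorem StrictConvexOn.map_mulVec_apply_lt (hf : StrictConvexOn ℝ s f)
    (hP : P ∈ rowStochastic ℝ n) (hx : ∀ i, x i ∈ s) {k i : n} (hki : P k i ≠ 0)
    (hxi : x i ≠ (P *ᵥ x) k) : f ((P *ᵥ x) k) < (P *ᵥ (f ∘ x)) k := by
  have h := (hf.map_sum_lt_iff_of_nonneg' (t := univ) (w := P k) (p := x)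
    (fun i _ => nonneg_of_mem_rowStochastic hP) (sum_row_of_mem_rowStochastic hP k)
    (fun i _ => hx i)).2 ⟨i, mem_univ _, hki, by simpa [mulVec, dotProduct] using hxi⟩
  simpa [mulVec, dotProduct] using h

theorem ConvexOn.sum_map_mulVec_le (hf : ConvexOn ℝ s f) (hP : P ∈ doublyStochastic ℝ n)
    (hx : ∀ i, x i ∈ s) : ∑ k, f ((P *ᵥ x) k) ≤ ∑ i, f (x i) := by
  have hP' := (mem_doublyStochastic_iff_mem_rowStochastic_and_mem_colStochastic.1 hP).1
  calc ∑ k, f ((P *ᵥ x) k)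
      ≤ ∑ k, (P *ᵥ (f ∘ x)) k := sum_le_sum fun k _ => hf.map_mulVec_apply_le hP' hx k
    _ = ∑ i, f (x i) := sum_mulVec_of_mem_doublyStochastic hP

theorem StrictConvexOn.sum_map_mulVec_lt (hf : StrictConvexOn ℝ s f)
    (hP : P ∈ doublyStochastic ℝ n) (hx : ∀ i, x i ∈ s) {k i : n} (hki : P k i ≠ 0)
    (hxi : x i ≠ (P *ᵥ x) k) : ∑ k, f ((P *ᵥ x) k) < ∑ i, f (x i) := by
  have hP' := (mem_doublyStochastic_iff_mem_rowStochastic_and_mem_colStochastic.1 hP).1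
  calc ∑ k, f ((P *ᵥ x) k)
      < ∑ k, (P *ᵥ (f ∘ x)) k :=
        sum_lt_sum (fun k _ => hf.convexOn.map_mulVec_apply_le hP' hx k)
          ⟨k, mem_univ _, hf.map_mulVec_apply_lt hP' hx hki hxi⟩
    _ = ∑ i, f (x i) := sum_mulVec_of_mem_doublyStochastic hP

end Stochastic

theorem StrictConvexOn.sum_comp_apply {ι : Type*} [Fintype ι] {s : Set ℝ} {f : ℝ → ℝ}
    (hf : StrictConvexOn ℝ s f) :
    StrictConvexOn ℝ (Set.univ.pi fun _ : ι => s) fun x => ∑ i, f (x i) := by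
  refine ⟨convex_pi fun _ _ => hf.1, fun x hx y hy hxy a b ha hb hab => ?_⟩
  obtain ⟨i, hi⟩ := Function.ne_iff.1 hxy
  simp only [Pi.add_apply, Pi.smul_apply, smul_eq_mul, mul_sum, ← sum_add_distrib]
  exact sum_lt_sum (fun j _ => hf.convexOn.2 (hx j trivial) (hy j trivial) ha.le hb.le hab)
    ⟨i, mem_univ _, hf.2 (hx i trivial) (hy i trivial) hi ha hb hab⟩

namespace Matrix

theorem convex_setOf_posDef {𝕜 n : Type*} [RCLike 𝕜] [Fintype n] :
    Convex ℝ {A : Matrix n n 𝕜 | A.PosDef} :=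
  convex_iff_forall_pos.2 fun _ hA _ hB _ _ ha hb _ => (hA.smul ha).add (hB.smul hb)

theorem IsHermitian.eq_of_isDiag {𝕜 n : Type*} [RCLike 𝕜] [DecidableEq n]
    {A B : Matrix n n 𝕜} (hA : A.IsHermitian) (hB : B.IsHermitian) (hAd : A.IsDiag)
    (hBd : B.IsDiag) (h : ∀ k, RCLike.re (A k k) = RCLike.re (B k k)) : A = B := by
  rw [← hAd.diagonal_diag, ← hBd.diagonal_diag, ← hA.coe_re_diag, ← hB.coe_re_diag]
  simp only [diag_apply, h]

variable {𝕜 n : Type*} [RCLike 𝕜] [Fintype n]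

theorem mul_star_self_apply_self (W : Matrix n n 𝕜) (k : n) :
    (W * star W) k k = ((∑ i, ‖W k i‖ ^ 2 : ℝ) : 𝕜) := by
  simp [mul_apply, RCLike.mul_conj]

theorem star_mul_self_apply_self (W : Matrix n n 𝕜) (i : n) :
    (star W * W) i i = ((∑ k, ‖W k i‖ ^ 2 : ℝ) : 𝕜) := by
  simp [mul_apply, RCLike.conj_mul]

variable [DecidableEq n]

theorem map_norm_sq_mem_doublyStochastic {W : Matrix n n 𝕜} (hW : W ∈ unitaryGroup n 𝕜) :
    W.map (‖·‖ ^ 2) ∈ doublyStochastic ℝ n := by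
  refine mem_doublyStochastic_iff_sum.2 ⟨fun _ _ => sq_nonneg _, fun k => ?_, fun i => ?_⟩
  · have h := mul_star_self_apply_self W k
    rw [mem_unitaryGroup_iff.1 hW, one_apply_eq] at h
    exact_mod_cast h.symm
  · have h := star_mul_self_apply_self W i
    rw [mem_unitaryGroup_iff'.1 hW, one_apply_eq] at h
    exact_mod_cast h.symm

theorem mul_diagonal_mul_star_apply_self (W : Matrix n n 𝕜) (x : n → ℝ) (k : n) :
    (W * diagonal (RCLike.ofReal ∘ x : n → 𝕜) * star W) k k =
      ((W.map (‖·‖ ^ 2) *ᵥ x) k : 𝕜) := by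
  rw [mul_apply]
  simp only [mul_diagonal, star_apply, RCLike.star_def, Function.comp_apply, mulVec, dotProduct,
    map_apply]
  push_cast
  refine sum_congr rfl fun i _ => ?_
  rw [mul_right_comm, RCLike.mul_conj, mul_comm]

theorem mul_diagonal_mul_star_eq_diagonal {W : Matrix n n 𝕜} (hW : W ∈ unitaryGroup n 𝕜)
    {x y : n → ℝ} (h : ∀ k i, W k i ≠ 0 → x i = y k) :
    W * diagonal (RCLike.ofReal ∘ x) * star W = diagonal (RCLike.ofReal ∘ y) := by
  have hcomm : W * diagonal (RCLike.ofReal ∘ x) = diagonal (RCLike.ofReal ∘ y) * W := by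
    ext k i
    rw [mul_diagonal, diagonal_mul]
    by_cases hki : W k i = 0
    · simp [hki]
    · simp [h k i hki, mul_comm]
  rw [hcomm, Matrix.mul_assoc, mem_unitaryGroup_iff.1 hW, Matrix.mul_one]

namespace IsHermitian

variable {A V : Matrix n n 𝕜} {s : Set ℝ} {f : ℝ → ℝ}

theorem mul_cfc (hA : A.IsHermitian) (g : ℝ → ℝ) :
    A * hA.cfc g = hA.cfc fun x => x * g x := by
  conv_lhs => arg 1; rw [hA.spectral_theorem]
  rw [IsHermitian.cfc, IsHermitian.cfc, ← map_mul, diagonal_mul_diagonal]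
  simp [Function.comp_def]

theorem re_trace_cfc (hA : A.IsHermitian) (f : ℝ → ℝ) :
    RCLike.re (cfc f A).trace = ∑ i, f (hA.eigenvalues i) := by
  rw [cfc_eq hA, IsHermitian.cfc, Unitary.conjStarAlgAut_apply, trace_mul_cycle,
    Unitary.coe_star_mul_self, Matrix.one_mul, trace_diagonal]
  simp

theorem star_eigenvectorUnitary_mul_mul (hA : A.IsHermitian) :
    star (hA.eigenvectorUnitary : Matrix n n 𝕜) * A * (hA.eigenvectorUnitary : Matrix n n 𝕜) =
      diagonal (RCLike.ofReal ∘ hA.eigenvalues) := by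
  simpa using hA.conjStarAlgAut_star_eigenvectorUnitary

theorem star_mul_mul_eq (hA : A.IsHermitian) (V : Matrix n n 𝕜) :
    star V * A * V = (star V * (hA.eigenvectorUnitary : Matrix n n 𝕜)) *
      diagonal (RCLike.ofReal ∘ hA.eigenvalues) *
        star (star V * (hA.eigenvectorUnitary : Matrix n n 𝕜)) := by
  conv_lhs => rw [hA.spectral_theorem, Unitary.conjStarAlgAut_apply]
  simp [Matrix.mul_assoc]

theorem re_star_mul_mul_apply_self (hA : A.IsHermitian) (V : Matrix n n 𝕜) (k : n) :
    RCLike.re ((star V * A * V) k k) =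
      ((star V * (hA.eigenvectorUnitary : Matrix n n 𝕜)).map (‖·‖ ^ 2) *ᵥ hA.eigenvalues) k := by
  rw [hA.star_mul_mul_eq, mul_diagonal_mul_star_apply_self, RCLike.ofReal_re]

theorem map_norm_sq_star_mul_eigenvectorUnitary_mem_doublyStochastic (hA : A.IsHermitian)
    (hV : V ∈ unitaryGroup n 𝕜) :
    (star V * (hA.eigenvectorUnitary : Matrix n n 𝕜)).map (‖·‖ ^ 2) ∈ doublyStochastic ℝ n :=
  map_norm_sq_mem_doublyStochastic (mul_mem (Unitary.star_mem hV) hA.eigenvectorUnitary.2)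

theorem re_star_mul_mul_apply_self_mem (hA : A.IsHermitian) (hV : V ∈ unitaryGroup n 𝕜)
    (hs : Convex ℝ s) (hmem : ∀ i, hA.eigenvalues i ∈ s) (k : n) :
    RCLike.re ((star V * A * V) k k) ∈ s := by
  rw [hA.re_star_mul_mul_apply_self]
  exact hs.mulVec_apply_mem (mem_doublyStochastic_iff_mem_rowStochastic_and_mem_colStochastic.1
    (hA.map_norm_sq_star_mul_eigenvectorUnitary_mem_doublyStochastic hV)).1 hmem k

theorem sum_map_re_star_mul_mul_apply_self_le (hA : A.IsHermitian) (hV : V ∈ unitaryGroup n 𝕜)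
    (hf : ConvexOn ℝ s f) (hmem : ∀ i, hA.eigenvalues i ∈ s) :
    ∑ k, f (RCLike.re ((star V * A * V) k k)) ≤ ∑ i, f (hA.eigenvalues i) := by
  simp only [hA.re_star_mul_mul_apply_self]
  exact hf.sum_map_mulVec_le (hA.map_norm_sq_star_mul_eigenvectorUnitary_mem_doublyStochastic hV)
    hmem

theorem sum_map_re_star_mul_mul_apply_self_lt (hA : A.IsHermitian) (hV : V ∈ unitaryGroup n 𝕜)
    (hf : StrictConvexOn ℝ s f) (hmem : ∀ i, hA.eigenvalues i ∈ s)
    (hdiag : ¬ (star V * A * V).IsDiag) :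
    ∑ k, f (RCLike.re ((star V * A * V) k k)) < ∑ i, f (hA.eigenvalues i) := by
  set W := star V * (hA.eigenvectorUnitary : Matrix n n 𝕜)
  have hW : W ∈ unitaryGroup n 𝕜 := mul_mem (Unitary.star_mem hV) hA.eigenvectorUnitary.2
  simp only [hA.re_star_mul_mul_apply_self]
  -- Otherwise `W` intertwines the eigenvalues with their row averages, so `V* A V` is diagonal.
  obtain ⟨k, i, hki, hne⟩ : ∃ k i, W k i ≠ 0 ∧
      hA.eigenvalues i ≠ (W.map (‖·‖ ^ 2) *ᵥ hA.eigenvalues) k := by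
    by_contra! h
    apply hdiag
    rw [hA.star_mul_mul_eq, mul_diagonal_mul_star_eq_diagonal hW h]
    exact isDiag_diagonal _
  exact hf.sum_map_mulVec_lt (hA.map_norm_sq_star_mul_eigenvectorUnitary_mem_doublyStochastic hV)
    hmem (pow_ne_zero 2 (norm_ne_zero_iff.2 hki)) hne

theorem not_isDiag_star_mul_mul_or_of_ne {B : Matrix n n 𝕜} (hA : A.IsHermitian)
    (hB : B.IsHermitian) (hV : V ∈ unitaryGroup n 𝕜) (hAB : A ≠ B)
    (h : ∀ k, RCLike.re ((star V * A * V) k k) = RCLike.re ((star V * B * V) k k)) :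
    ¬ (star V * A * V).IsDiag ∨ ¬ (star V * B * V).IsDiag := by
  have hne : star V * A * V ≠ star V * B * V := fun hAB' => hAB <|
    EquivLike.injective (Unitary.conjStarAlgAut ℝ _ (star ⟨V, hV⟩))
      (by simpa only [Unitary.conjStarAlgAut_apply, Unitary.coe_star, star_star] using hAB')
  by_contra! hdiag
  exact hne (eq_of_isDiag (isHermitian_conjTranspose_mul_mul V hA)
    (isHermitian_conjTranspose_mul_mul V hB) hdiag.1 hdiag.2 h)

end IsHermitian

theorem strictConvexOn_re_trace_cfc {f : ℝ → ℝ} (hf : StrictConvexOn ℝ (Set.Ioi 0) f) :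
    StrictConvexOn ℝ {A : Matrix n n 𝕜 | A.PosDef} fun A => RCLike.re (cfc f A).trace := by
  refine ⟨convex_setOf_posDef, fun A hA B hB hAB a b ha hb hab => ?_⟩
  have hρ : (a • A + b • B).PosDef := (hA.smul ha).add (hB.smul hb)
  set V := (hρ.isHermitian.eigenvectorUnitary : Matrix n n 𝕜)
  have hV : V ∈ unitaryGroup n 𝕜 := hρ.isHermitian.eigenvectorUnitary.2
  set α : n → ℝ := fun k => RCLike.re ((star V * A * V) k k)
  set β : n → ℝ := fun k => RCLike.re ((star V * B * V) k k)
  have hμ : hρ.isHermitian.eigenvalues = a • α + b • β := by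
    funext k
    have h := congr_arg (fun M => RCLike.re (M k k)) hρ.isHermitian.star_eigenvectorUnitary_mul_mul
    simpa [Matrix.mul_add, Matrix.add_mul, RCLike.smul_re, α, β] using h.symm
  have hα : α ∈ Set.univ.pi fun _ => Set.Ioi 0 := fun k _ =>
    hA.isHermitian.re_star_mul_mul_apply_self_mem hV (convex_Ioi 0) hA.eigenvalues_pos k
  have hβ : β ∈ Set.univ.pi fun _ => Set.Ioi 0 := fun k _ =>
    hB.isHermitian.re_star_mul_mul_apply_self_mem hV (convex_Ioi 0) hB.eigenvalues_pos k
  simp only [smul_eq_mul, hA.isHermitian.re_trace_cfc, hB.isHermitian.re_trace_cfc,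
    hρ.isHermitian.re_trace_cfc, hμ]
  have hA_le := hA.isHermitian.sum_map_re_star_mul_mul_apply_self_le hV hf.convexOn
    hA.eigenvalues_pos
  have hB_le := hB.isHermitian.sum_map_re_star_mul_mul_apply_self_le hV hf.convexOn
    hB.eigenvalues_pos
  have hconv := hf.sum_comp_apply.convexOn.2 hα hβ ha.le hb.le hab
  have hstrict : ∑ k, f ((a • α + b • β) k) < a • ∑ k, f (α k) + b • ∑ k, f (β k) ∨
      ∑ k, f (α k) < ∑ i, f (hA.isHermitian.eigenvalues i) ∨
      ∑ k, f (β k) < ∑ i, f (hB.isHermitian.eigenvalues i) := by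
    by_cases hαβ : α = β
    · exact Or.inr ((hA.isHermitian.not_isDiag_star_mul_mul_or_of_ne hB.isHermitian hV hAB
        (congr_fun hαβ)).imp
        (hA.isHermitian.sum_map_re_star_mul_mul_apply_self_lt hV hf hA.eigenvalues_pos)
        (hB.isHermitian.sum_map_re_star_mul_mul_apply_self_lt hV hf hB.eigenvalues_pos))
    · exact Or.inl (hf.sum_comp_apply.2 hα hβ hαβ ha hb hab)
  simp only [smul_eq_mul] at hconv hstrict
  rcases hstrict with h | h | h <;> nlinarith

end Matrix

theorem traceRhoLogRho_eq_re_trace_cfc {m : ℕ} {ρ : Matrix (Fin m) (Fin m) ℂ}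
    (hρ : ρ.IsHermitian) :
    traceRhoLogRho ρ = RCLike.re (cfc (fun x => x * Real.log x) ρ).trace := by
  rw [traceRhoLogRho, dif_pos hρ, hρ.mul_cfc, IsHermitian.cfc_eq hρ]
  rfl

/-- `ρ ↦ trace (ρ log ρ)` is strictly convex on the cone of Hermitian
positive definite `m×m` matrices. -/
theorem strictConvexOn_traceRhoLogRho {m : ℕ} :
    StrictConvexOn ℝ {ρ : Matrix (Fin m) (Fin m) ℂ | ρ.PosDef} (traceRhoLogRho (m := m)) :=
  (strictConvexOn_re_trace_cfc
      (Real.strictConvexOn_mul_log.subset Set.Ioi_subset_Ici_self (convex_Ioi 0))).congr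
    fun _ hρ => (traceRhoLogRho_eq_re_trace_cfc hρ.isHermitian).symm
end

section
/- Suppose ρ̂ ≻ 0 satisfies L(ρ̂) = R and ρ̂ = (L*(λ))⁻¹ for some λ with L*(λ) ≻ 0. Then ρ̂ is the unique minimizer of ρ ↦ −trace(log ρ) over all Hermitian positive definite ρ with L(ρ) = R. -/
open scoped ComplexOrder
open Matrix

/-- `ρ ↦ −trace (log ρ)` (via the spectral matrix logarithm), extended by junk
off the Hermitian matrices. -/
noncomputable def negTraceLog {m : ℕ} (ρ : Matrix (Fin m) (Fin m) ℂ) : ℝ :=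
  if h : ρ.IsHermitian then -(((h.cfc Real.log).trace).re) else 0

namespace Matrix

variable {n 𝕜 : Type*} [Fintype n] [DecidableEq n] [RCLike 𝕜]

lemma IsHermitian.trace_cfc {A : Matrix n n 𝕜} (hA : A.IsHermitian) (f : ℝ → ℝ) :
    (hA.cfc f).trace = ∑ i, (f (hA.eigenvalues i) : 𝕜) := by
  rw [IsHermitian.cfc, Unitary.conjStarAlgAut_apply, trace_mul_cycle, Unitary.coe_star_mul_self,
    one_mul, trace_diagonal]
  rfl

lemma PosDef.ofReal_re_det {A : Matrix n n 𝕜} (hA : A.PosDef) :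
    ((RCLike.re A.det : ℝ) : 𝕜) = A.det :=
  RCLike.conj_eq_iff_re.mp (RCLike.conj_eq_iff_im.mpr (RCLike.pos_iff.mp hA.det_pos).2)

lemma PosDef.re_det_pos {A : Matrix n n 𝕜} (hA : A.PosDef) : 0 < RCLike.re A.det :=
  (RCLike.pos_iff.mp hA.det_pos).1

lemma IsHermitian.eq_one_of_forall_eigenvalues_eq_one {A : Matrix n n 𝕜} (hA : A.IsHermitian)
    (h : ∀ i, hA.eigenvalues i = 1) : A = 1 := by
  refine CFC.eq_one_of_spectrum_subset_one (R := ℝ) A ?_ hA.isSelfAdjoint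
  rw [hA.spectrum_real_eq_range_eigenvalues]
  rintro _ ⟨i, rfl⟩
  exact h i

open scoped MatrixOrder in
lemma PosDef.exists_isHermitian_isUnit_mul_self_eq {A : Matrix n n 𝕜} (hA : A.PosDef) :
    ∃ S : Matrix n n 𝕜, S.IsHermitian ∧ IsUnit S ∧ S * S = A :=
  ⟨CFC.sqrt A, (CFC.sqrt_nonneg A).isSelfAdjoint, hA.isStrictlyPositive.isUnit_cfcSqrt,
    CFC.sqrt_mul_sqrt_self A hA.posSemidef.nonneg⟩

lemma PosDef.log_re_det_lt_re_trace_sub_card {C : Matrix n n 𝕜} (hC : C.PosDef) (hne : C ≠ 1) :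
    Real.log (RCLike.re C.det) < RCLike.re C.trace - Fintype.card n := by
  rw [hC.1.det_eq_prod_eigenvalues, hC.1.trace_eq_sum_eigenvalues, ← RCLike.ofReal_prod,
    ← RCLike.ofReal_sum, RCLike.ofReal_re, RCLike.ofReal_re,
    Real.log_prod fun i _ ↦ (hC.eigenvalues_pos i).ne']
  obtain ⟨i, hi⟩ : ∃ i, hC.1.eigenvalues i ≠ 1 := by
    by_contra! h
    exact hne (hC.1.eq_one_of_forall_eigenvalues_eq_one h)
  calc ∑ j, Real.log (hC.1.eigenvalues j) < ∑ j, (hC.1.eigenvalues j - 1) :=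
        Finset.sum_lt_sum (fun j _ ↦ Real.log_le_sub_one_of_pos (hC.eigenvalues_pos j))
          ⟨i, Finset.mem_univ i, Real.log_lt_sub_one_of_pos (hC.eigenvalues_pos i) hi⟩
    _ = ∑ j, hC.1.eigenvalues j - Fintype.card n := by simp [Finset.sum_sub_distrib]

lemma PosDef.log_re_det_inv_mul_lt {A B : Matrix n n 𝕜} (hA : A.PosDef) (hB : B.PosDef)
    (hne : B ≠ A) :
    Real.log (RCLike.re (A⁻¹ * B).det) < RCLike.re (A⁻¹ * B).trace - Fintype.card n := by
  -- `A⁻¹ * B` need not be Hermitian, but it is similar to the positive definite `S⁻¹ * B * S⁻¹`.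
  obtain ⟨S, hSh, hSu, rfl⟩ := hA.exists_isHermitian_isUnit_mul_self_eq
  have hSdet : IsUnit S.det := (isUnit_iff_isUnit_det S).mp hSu
  set C := S⁻¹ * B * S⁻¹ with hCdef
  have hC : C.PosDef := by
    have := hB.conjTranspose_mul_mul_same <| mulVec_injective_iff_isUnit.mpr <|
      (isUnit_iff_isUnit_det _).mpr (isUnit_nonsing_inv_det S hSdet)
    rwa [hSh.inv.eq] at this
  have hSCS : S * C * S = B := by
    simp only [hCdef, Matrix.mul_assoc, mul_nonsing_inv_cancel_left _ _ hSdet,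
      nonsing_inv_mul _ hSdet, mul_one]
  have hC1 : C ≠ 1 := by
    rintro h
    rw [h, mul_one] at hSCS
    exact hne hSCS.symm
  have hdet : C.det = ((S * S)⁻¹ * B).det := by
    rw [Matrix.mul_inv_rev, det_mul, det_mul, det_mul, det_mul]; ring
  have htr : C.trace = ((S * S)⁻¹ * B).trace := by
    rw [Matrix.mul_inv_rev, trace_mul_cycle]
  rw [← hdet, ← htr]
  exact hC.log_re_det_lt_re_trace_sub_card hC1

lemma PosDef.log_re_det_lt_add_re_trace_inv_mul {A B : Matrix n n 𝕜} (hA : A.PosDef)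
    (hB : B.PosDef) (hne : B ≠ A) :
    Real.log (RCLike.re B.det) <
      Real.log (RCLike.re A.det) + RCLike.re (A⁻¹ * B).trace - Fintype.card n := by
  have hdet : RCLike.re (A⁻¹ * B).det = RCLike.re B.det / RCLike.re A.det := by
    rw [det_mul, det_nonsing_inv, Ring.inverse_eq_inv', ← hA.ofReal_re_det, ← hB.ofReal_re_det,
      ← RCLike.ofReal_inv, ← RCLike.ofReal_mul, RCLike.ofReal_re, RCLike.ofReal_re,
      RCLike.ofReal_re, inv_mul_eq_div]
  have key := hA.log_re_det_inv_mul_lt hB hne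
  rw [hdet, Real.log_div hB.re_det_pos.ne' hA.re_det_pos.ne'] at key
  linarith

end Matrix

lemma negTraceLog_eq_neg_log_re_det {m : ℕ} {A : Matrix (Fin m) (Fin m) ℂ} (hA : A.PosDef) :
    negTraceLog A = -Real.log A.det.re := by
  rw [negTraceLog, dif_pos hA.1, hA.1.trace_cfc, hA.1.det_eq_prod_eigenvalues,
    ← RCLike.ofReal_sum, ← RCLike.ofReal_prod, ← RCLike.re_to_complex, ← RCLike.re_to_complex,
    RCLike.ofReal_re, RCLike.ofReal_re]
  exact congrArg Neg.neg (Real.log_prod fun i _ ↦ (hA.eigenvalues_pos i).ne').symm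

section adjoint

variable {N p q m : ℕ} (Gl : Fin N → Matrix (Fin p) (Fin m) ℂ)
  (Gr : Fin N → Matrix (Fin m) (Fin q) ℂ) (lam : Matrix (Fin p) (Fin q) ℂ)

lemma trace_sum_mul_eq_trace_mul_Lmap_conjTranspose {ρ : Matrix (Fin m) (Fin m) ℂ}
    (hρ : ρ.IsHermitian) :
    ((∑ k, (Gl k)ᴴ * lam * (Gr k)ᴴ) * ρ).trace = (lam * (Lmap Gl Gr ρ)ᴴ).trace := by
  rw [Lmap, Finset.sum_mul, trace_sum, conjTranspose_sum, Matrix.mul_sum, trace_sum]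
  refine Finset.sum_congr rfl fun k _ ↦ ?_
  rw [conjTranspose_mul, conjTranspose_mul, hρ.eq, Matrix.mul_assoc, Matrix.mul_assoc,
    trace_mul_comm]
  simp only [Matrix.mul_assoc]

lemma trace_Lstar_mul {ρ : Matrix (Fin m) (Fin m) ℂ} (hρ : ρ.IsHermitian) :
    (Lstar Gl Gr lam * ρ).trace = ((lam * (Lmap Gl Gr ρ)ᴴ).trace.re : ℂ) := by
  set M := ∑ k, (Gl k)ᴴ * lam * (Gr k)ᴴ
  have hstar : (Mᴴ * ρ).trace = star (M * ρ).trace := by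
    rw [← trace_conjTranspose, conjTranspose_mul, hρ.eq, trace_mul_comm]
  rw [Lstar, smul_mul_assoc, trace_smul, add_mul, trace_add, hstar,
    trace_sum_mul_eq_trace_mul_Lmap_conjTranspose Gl Gr lam hρ, Complex.star_def,
    Complex.add_conj, smul_eq_mul]
  push_cast
  ring

end adjoint

/-- if `ρ̂ ≻ 0` satisfies `L ρ̂ = R` and `ρ̂ = (L*(λ))⁻¹` for some `λ` with
`L*(λ) ≻ 0`, then `ρ̂` is the unique minimizer of `ρ ↦ −trace (log ρ)` over Hermitian
positive definite `ρ` with `L ρ = R`. -/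
theorem unique_minimizer_negTraceLog {N p q m : ℕ}
    (Gl : Fin N → Matrix (Fin p) (Fin m) ℂ) (Gr : Fin N → Matrix (Fin m) (Fin q) ℂ)
    (R : Matrix (Fin p) (Fin q) ℂ) (ρhat : Matrix (Fin m) (Fin m) ℂ)
    (hρhat : ρhat.PosDef) (hmatch : Lmap Gl Gr ρhat = R)
    (lam : Matrix (Fin p) (Fin q) ℂ) (hlam : (Lstar Gl Gr lam).PosDef)
    (hform : ρhat = (Lstar Gl Gr lam)⁻¹) :
    ∀ ρ : Matrix (Fin m) (Fin m) ℂ, ρ.PosDef → Lmap Gl Gr ρ = R → ρ ≠ ρhat →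
      negTraceLog ρhat < negTraceLog ρ := by
  intro ρ hρ hLρ hne
  have hinv : ρhat⁻¹ = Lstar Gl Gr lam := by
    rw [hform, nonsing_inv_nonsing_inv _ ((isUnit_iff_isUnit_det _).mp hlam.isUnit)]
  have htrace : (ρhat⁻¹ * ρ).trace = m := by
    rw [hinv, trace_Lstar_mul Gl Gr lam hρ.1, hLρ, ← hmatch, ← trace_Lstar_mul Gl Gr lam hρhat.1,
      ← hinv, nonsing_inv_mul _ ((isUnit_iff_isUnit_det _).mp hρhat.isUnit), trace_one,
      Fintype.card_fin]
  have key := hρhat.log_re_det_lt_add_re_trace_inv_mul hρ hne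
  rw [htrace] at key
  rw [negTraceLog_eq_neg_log_re_det hρhat, negTraceLog_eq_neg_log_re_det hρ]
  simp only [RCLike.re_to_complex, Complex.natCast_re, Fintype.card_fin] at key
  linarith
end
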